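/- Let μ > 0, v₀ > 0 and fix Λ > 0. For 0 < k < Λ define Σ_k^Λ(0) = −(1/(4π²)) ∫_k^Λ ∫_{−k}^{k} h(k,p,l)² · p · l / (8k · (e(p) + e(l))) ds dt, where p = (t+s)/2 and l = (t−s)/2. Then lim_{k→0⁺} Σ_k^Λ(0) = −∞. (Consequently no k-independent counterterm c^Λ can renormalize the self-energy.) -/

import Mathlib

open Real Filter Asymptotics Topology MeasureTheory

/-- Bogoliubov dispersion relation (contact interaction). -/
noncomputable def disp (μ k : ℝ) : ℝ := Real.sqrt (k^4/4 + μ*k^2)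

/-- Bogoliubov coefficient σ. -/
noncomputable def sig (μ k : ℝ) : ℝ :=
  Real.sqrt ((Real.sqrt ((disp μ k)^2 + μ^2) + disp μ k) / (2 * disp μ k))

/-- Bogoliubov coefficient γ. -/
noncomputable def gam (μ k : ℝ) : ℝ :=
  Real.sqrt ((Real.sqrt ((disp μ k)^2 + μ^2) - disp μ k) / (2 * disp μ k))

/-- Cubic coupling function h(k,p,l). -/
noncomputable def hcub (μ v₀ k p l : ℝ) : ℝ :=
  2 * Real.sqrt (μ * v₀) *
    (sig μ p * gam μ k * gam μ l + sig μ l * gam μ k * gam μ p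
      + sig μ p * sig μ l * sig μ k - gam μ p * sig μ k * sig μ l
      - gam μ l * sig μ k * sig μ p - gam μ p * gam μ l * gam μ k)

noncomputable def A1 (μ x y : ℝ) : ℝ := Real.sqrt ((x + y)^2 + 4*μ^2)
noncomputable def A2 (μ x y : ℝ) : ℝ := Real.sqrt ((x - y)^2 + 4*μ^2)

/-- The cutoff self-energy at z = 0, in the variables t = p+l, s = p−l. -/
noncomputable def SigmaCut0 (μ v₀ Λ k : ℝ) : ℝ :=
  -(1/(4*Real.pi^2)) * ∫ t in k..Λ, ∫ s in (-k)..k,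
    (hcub μ v₀ k ((t+s)/2) ((t-s)/2))^2 * ((t+s)/2) * ((t-s)/2)
      / (8*k*(disp μ ((t+s)/2) + disp μ ((t-s)/2)))

/-!
As `k → 0⁺` the dispersion `e(k)` tends to `0` and `γ(k)² ≥ μ / (6 e(k))` blows up. For
`t ∈ [Λ/2, Λ]` both momenta `p, l` stay in `[Λ/8, Λ]`, so `γ(p), γ(l)` stay bounded while
`σ(p)σ(l) - γ(p)γ(l) ≥ 1`, and the coupling satisfies `h(k,p,l) ≥ √(μ v₀) γ(k)`. The integrand
is then at least a constant times `γ(k)² / k` on a strip of area `Λ k`, whence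
`Σ_k^Λ(0) ≤ -C γ(k)² → -∞`. For fixed `k` the integrand is also bounded (`p σ(p)² ≤ p + √μ/2`),
so the iterated integral is a genuine integral and not Lean's junk value `0`.
-/

open Set Interval

lemma intervalIntegrable_of_nonneg_of_le {f : ℝ → ℝ} {a b M : ℝ} (hf : Measurable f)
    (h₀ : ∀ x ∈ Ι a b, 0 ≤ f x) (hM : ∀ x ∈ Ι a b, f x ≤ M) :
    IntervalIntegrable f volume a b :=
  (intervalIntegrable_const (c := M)).mono_fun' hf.aestronglyMeasurable
    (ae_restrict_of_forall_mem measurableSet_uIoc fun x hx =>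
      (Real.norm_of_nonneg (h₀ x hx)).trans_le (hM x hx))

lemma mul_mul_le_integral_integral {F : ℝ → ℝ → ℝ} {a m b c d L M : ℝ}
    (hF : Measurable (Function.uncurry F)) (ham : a < m) (hmb : m ≤ b) (hcd : c ≤ d)
    (hF₀ : ∀ t ∈ Ioc a b, ∀ s ∈ Icc c d, 0 ≤ F t s)
    (hFM : ∀ t ∈ Ioc a b, ∀ s ∈ Icc c d, F t s ≤ M)
    (hLF : ∀ t ∈ Icc m b, ∀ s ∈ Icc c d, L ≤ F t s) :
    (b - m) * ((d - c) * L) ≤ ∫ t in a..b, ∫ s in c..d, F t s := by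
  have hab : a ≤ b := ham.le.trans hmb
  have hsection : ∀ t ∈ Ioc a b, IntervalIntegrable (F t) volume c d := fun t ht =>
    intervalIntegrable_of_nonneg_of_le hF.of_uncurry_left
      (fun s hs => hF₀ t ht s (Ioc_subset_Icc_self (uIoc_of_le hcd ▸ hs)))
      (fun s hs => hFM t ht s (Ioc_subset_Icc_self (uIoc_of_le hcd ▸ hs)))
  have hinner₀ : ∀ t ∈ Ioc a b, 0 ≤ ∫ s in c..d, F t s := fun t ht =>
    intervalIntegral.integral_nonneg hcd (hF₀ t ht)
  have hinnerM : ∀ t ∈ Ioc a b, ∫ s in c..d, F t s ≤ (d - c) * M := fun t ht => by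
    simpa using intervalIntegral.integral_mono_on hcd (hsection t ht) intervalIntegrable_const
      (hFM t ht)
  have hinnerL : ∀ t ∈ Icc m b, (d - c) * L ≤ ∫ s in c..d, F t s := fun t ht => by
    simpa using intervalIntegral.integral_mono_on hcd intervalIntegrable_const
      (hsection t ⟨ham.trans_le ht.1, ht.2⟩) (hLF t ht)
  have hmeas : Measurable fun t => ∫ s in c..d, F t s := by
    simp_rw [intervalIntegral.integral_of_le hcd]
    exact (hF.stronglyMeasurable.integral_prod_right (ν := volume.restrict (Ioc c d))).measurable
  have houter : IntervalIntegrable (fun t => ∫ s in c..d, F t s) volume a b :=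
    intervalIntegrable_of_nonneg_of_le hmeas (fun t ht => hinner₀ t (uIoc_of_le hab ▸ ht))
      (fun t ht => hinnerM t (uIoc_of_le hab ▸ ht))
  calc (b - m) * ((d - c) * L) = ∫ _ in m..b, (d - c) * L := by simp [mul_left_comm]
    _ ≤ ∫ t in m..b, ∫ s in c..d, F t s :=
        intervalIntegral.integral_mono_on hmb intervalIntegrable_const
          (houter.mono_set (by simpa [uIcc_of_le, hab, hmb] using Icc_subset_Icc_left ham.le))
          hinnerL
    _ ≤ ∫ t in a..b, ∫ s in c..d, F t s :=
        intervalIntegral.integral_mono_interval ham.le hmb le_rfl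
          (ae_restrict_of_forall_mem measurableSet_Ioc hinner₀) houter

namespace Bogoliubov

variable {μ v₀ Λ k p l x : ℝ}

lemma disp_nonneg (μ x : ℝ) : 0 ≤ disp μ x := sqrt_nonneg _

lemma disp_pos (hμ : 0 < μ) (hx : 0 < x) : 0 < disp μ x :=
  sqrt_pos.2 (by positivity)

lemma disp_le_disp (hμ : 0 ≤ μ) {a b : ℝ} (ha : 0 ≤ a) (hab : a ≤ b) :
    disp μ a ≤ disp μ b := by
  apply sqrt_le_sqrt
  nlinarith [mul_le_mul hab hab ha (ha.trans hab)]

lemma sqrt_mul_le_disp (hμ : 0 ≤ μ) (hx : 0 ≤ x) : √μ * x ≤ disp μ x := by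
  calc √μ * x = √(μ * x ^ 2) := by rw [sqrt_mul hμ, sqrt_sq hx]
    _ ≤ disp μ x := sqrt_le_sqrt (by nlinarith [sq_nonneg (x ^ 2)])

@[fun_prop] lemma continuous_disp (μ : ℝ) : Continuous (disp μ) := by
  unfold disp; fun_prop

lemma tendsto_disp_nhdsGT_zero (hμ : 0 < μ) : Tendsto (disp μ) (𝓝[>] 0) (𝓝[>] 0) :=
  tendsto_nhdsWithin_iff.2
    ⟨((continuous_disp μ).tendsto' 0 0 (by simp [disp])).mono_left nhdsWithin_le_nhds,
      eventually_nhdsWithin_of_forall fun _ hx => disp_pos hμ hx⟩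

@[fun_prop] lemma measurable_sig (μ : ℝ) : Measurable (sig μ) := by
  unfold sig; fun_prop

@[fun_prop] lemma measurable_gam (μ : ℝ) : Measurable (gam μ) := by
  unfold gam; fun_prop

lemma sig_nonneg (μ x : ℝ) : 0 ≤ sig μ x := sqrt_nonneg _

lemma gam_nonneg (μ x : ℝ) : 0 ≤ gam μ x := sqrt_nonneg _

lemma disp_le_sqrt_disp_sq_add_sq (μ x : ℝ) : disp μ x ≤ √(disp μ x ^ 2 + μ ^ 2) :=
  le_sqrt_of_sq_le (by nlinarith [sq_nonneg μ])

lemma sig_sq (he : 0 < disp μ x) :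
    sig μ x ^ 2 = (√(disp μ x ^ 2 + μ ^ 2) + disp μ x) / (2 * disp μ x) :=
  sq_sqrt (by positivity)

lemma gam_sq (he : 0 < disp μ x) :
    gam μ x ^ 2 = (√(disp μ x ^ 2 + μ ^ 2) - disp μ x) / (2 * disp μ x) :=
  sq_sqrt (div_nonneg (by linarith [disp_le_sqrt_disp_sq_add_sq μ x]) (by positivity))

lemma sig_sq_sub_gam_sq (he : 0 < disp μ x) : sig μ x ^ 2 - gam μ x ^ 2 = 1 := by
  rw [sig_sq he, gam_sq he]
  field_simp
  ring

lemma gam_le_sig (he : 0 < disp μ x) : gam μ x ≤ sig μ x :=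
  (pow_le_pow_iff_left₀ (gam_nonneg μ x) (sig_nonneg μ x) two_ne_zero).1
    (by linarith [sig_sq_sub_gam_sq he])

lemma sig_le_one_add_gam (he : 0 < disp μ x) : sig μ x ≤ 1 + gam μ x :=
  (pow_le_pow_iff_left₀ (sig_nonneg μ x) (by linarith [gam_nonneg μ x]) two_ne_zero).1
    (by nlinarith [sig_sq_sub_gam_sq he, gam_nonneg μ x])

lemma two_mul_gam_mul_sig_sub_gam_le_one (he : 0 < disp μ x) :
    2 * gam μ x * (sig μ x - gam μ x) ≤ 1 := by
  nlinarith [sig_sq_sub_gam_sq he, gam_le_sig he, gam_nonneg μ x]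

lemma one_le_sig_mul_sig_sub_gam_mul_gam (hx : 0 < disp μ x) {y : ℝ} (hy : 0 < disp μ y) :
    1 ≤ sig μ x * sig μ y - gam μ x * gam μ y := by
  have hγ := mul_nonneg (gam_nonneg μ x) (gam_nonneg μ y)
  have hσ := mul_nonneg (sig_nonneg μ x) (sig_nonneg μ y)
  have h : (1 + gam μ x * gam μ y) ^ 2 ≤ (sig μ x * sig μ y) ^ 2 := by
    nlinarith [sig_sq_sub_gam_sq hx, sig_sq_sub_gam_sq hy, sq_nonneg (gam μ x - gam μ y)]
  linarith [(pow_le_pow_iff_left₀ (by linarith) hσ two_ne_zero).1 h]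

lemma sig_sq_le (hμ : 0 ≤ μ) (he : 0 < disp μ x) : sig μ x ^ 2 ≤ 1 + μ / (2 * disp μ x) := by
  have hS : √(disp μ x ^ 2 + μ ^ 2) ≤ disp μ x + μ :=
    sqrt_le_iff.2 ⟨by positivity, by nlinarith [disp_nonneg μ x]⟩
  rw [sig_sq he, one_add_div (by positivity)]
  exact div_le_div_of_nonneg_right (by linarith) (by positivity)

lemma gam_le_div (hμ : 0 ≤ μ) (he : 0 < disp μ x) : gam μ x ≤ μ / (2 * disp μ x) := by
  set e := disp μ x
  have hS : √(e ^ 2 + μ ^ 2) - e ≤ μ ^ 2 / (2 * e) := by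
    rw [le_div_iff₀ (by positivity)]
    nlinarith [sq_sqrt (by positivity : 0 ≤ e ^ 2 + μ ^ 2), disp_le_sqrt_disp_sq_add_sq μ x]
  refine (pow_le_pow_iff_left₀ (gam_nonneg μ x) (by positivity) two_ne_zero).1 ?_
  rw [gam_sq he, div_pow, div_le_div_iff₀ (by positivity) (by positivity)]
  rw [le_div_iff₀ (by positivity)] at hS
  nlinarith

lemma div_le_gam_sq (hμ : 0 < μ) (he : 0 < disp μ x) (heμ : disp μ x ≤ μ) :
    μ / (6 * disp μ x) ≤ gam μ x ^ 2 := by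
  set e := disp μ x
  have hS : e + μ / 3 ≤ √(e ^ 2 + μ ^ 2) := le_sqrt_of_sq_le (by nlinarith)
  rw [gam_sq he, div_le_div_iff₀ (by positivity) (by positivity)]
  nlinarith

lemma tendsto_gam_sq_nhdsGT_zero (hμ : 0 < μ) :
    Tendsto (fun k => gam μ k ^ 2) (𝓝[>] 0) atTop := by
  have hdisp := tendsto_disp_nhdsGT_zero hμ
  have hinv : Tendsto (fun k => μ / 6 * (disp μ k)⁻¹) (𝓝[>] 0) atTop :=
    (tendsto_inv_nhdsGT_zero.comp hdisp).const_mul_atTop (by positivity)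
  refine tendsto_atTop_mono' _ ?_ hinv
  filter_upwards [self_mem_nhdsWithin,
    (hdisp.mono_right nhdsWithin_le_nhds).eventually (gt_mem_nhds hμ)] with k hk hkμ
  have he := disp_pos hμ hk
  calc μ / 6 * (disp μ k)⁻¹ = μ / (6 * disp μ k) := by field_simp
    _ ≤ gam μ k ^ 2 := div_le_gam_sq hμ he hkμ.le

lemma mul_sig_sq_le (hμ : 0 < μ) (hx : 0 < x) : x * sig μ x ^ 2 ≤ x + √μ / 2 := by
  have he := disp_pos hμ hx
  have h : μ / (2 * disp μ x) * x ≤ √μ / 2 := by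
    rw [div_mul_eq_mul_div, div_le_div_iff₀ (by positivity) two_pos]
    nlinarith [sqrt_mul_le_disp hμ.le hx.le, sq_sqrt hμ.le, sqrt_nonneg μ]
  nlinarith [sig_sq_le hμ.le he]

noncomputable def vertex (μ k p l : ℝ) : ℝ :=
  sig μ p * gam μ k * gam μ l + sig μ l * gam μ k * gam μ p
    + sig μ p * sig μ l * sig μ k - gam μ p * sig μ k * sig μ l
    - gam μ l * sig μ k * sig μ p - gam μ p * gam μ l * gam μ k

lemma hcub_eq_mul_vertex (μ v₀ k p l : ℝ) :
    hcub μ v₀ k p l = 2 * √(μ * v₀) * vertex μ k p l := rfl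

lemma abs_vertex_le (hμ : 0 < μ) (hk : 0 < k) (hp : 0 < p) (hl : 0 < l) :
    |vertex μ k p l| ≤ 3 * (sig μ k * sig μ p * sig μ l) := by
  have := gam_le_sig (disp_pos hμ hk)
  have := gam_le_sig (disp_pos hμ hp)
  have := gam_le_sig (disp_pos hμ hl)
  have := gam_nonneg μ k; have := gam_nonneg μ p; have := gam_nonneg μ l
  have := sig_nonneg μ k; have := sig_nonneg μ p; have := sig_nonneg μ l
  have : sig μ p * gam μ k * gam μ l ≤ sig μ p * sig μ k * sig μ l := by gcongr
  have : sig μ l * gam μ k * gam μ p ≤ sig μ l * sig μ k * sig μ p := by gcongr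
  have : gam μ p * sig μ k * sig μ l ≤ sig μ p * sig μ k * sig μ l := by gcongr
  have : gam μ l * sig μ k * sig μ p ≤ sig μ l * sig μ k * sig μ p := by gcongr
  have : gam μ p * gam μ l * gam μ k ≤ sig μ p * sig μ l * sig μ k := by gcongr
  have : 0 ≤ sig μ p * gam μ k * gam μ l + sig μ l * gam μ k * gam μ p := by positivity
  have : 0 ≤ gam μ p * sig μ k * sig μ l + gam μ l * sig μ k * sig μ p := by positivity
  have : 0 ≤ gam μ p * gam μ l * gam μ k := by positivity
  exact abs_le.2 ⟨by unfold vertex; linarith, by unfold vertex; linarith⟩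

lemma hcub_sq_le (hμ : 0 < μ) (hv : 0 ≤ v₀) (hk : 0 < k) (hp : 0 < p) (hl : 0 < l) :
    hcub μ v₀ k p l ^ 2 ≤ 36 * (μ * v₀) * (sig μ k * sig μ p * sig μ l) ^ 2 :=
  calc hcub μ v₀ k p l ^ 2 = 4 * (μ * v₀) * |vertex μ k p l| ^ 2 := by
        rw [sq_abs, hcub_eq_mul_vertex, mul_pow, mul_pow, sq_sqrt (by positivity)]; ring
    _ ≤ 4 * (μ * v₀) * (3 * (sig μ k * sig μ p * sig μ l)) ^ 2 := by
        gcongr; exact abs_vertex_le hμ hk hp hl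
    _ = 36 * (μ * v₀) * (sig μ k * sig μ p * sig μ l) ^ 2 := by ring

lemma half_gam_le_vertex (hμ : 0 < μ) (hk : 0 < k) (hp : 0 < p) (hl : 0 < l) {G : ℝ}
    (hγp : gam μ p ≤ G) (hγl : gam μ l ≤ G) (hγk : 2 * (1 + G) * G ≤ gam μ k ^ 2) :
    gam μ k / 2 ≤ vertex μ k p l := by
  have hek := disp_pos hμ hk
  have hep := disp_pos hμ hp
  have hel := disp_pos hμ hl
  have := gam_nonneg μ k; have := gam_nonneg μ p; have := gam_nonneg μ l
  have hA : sig μ p * gam μ l + sig μ l * gam μ p - gam μ p * gam μ l ≤ gam μ k ^ 2 := by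
    have : sig μ p * gam μ l ≤ (1 + G) * G := by
      grw [sig_le_one_add_gam hep, hγp, hγl]; linarith
    have : sig μ l * gam μ p ≤ (1 + G) * G := by
      grw [sig_le_one_add_gam hel, hγl, hγp]; linarith
    nlinarith
  set A := sig μ p * gam μ l + sig μ l * gam μ p - gam μ p * gam μ l
  have hvertex : vertex μ k p l =
      sig μ k * (sig μ p * sig μ l - gam μ p * gam μ l) - (sig μ k - gam μ k) * A := by
    unfold vertex; ring
  have hσk : sig μ k ≤ sig μ k * (sig μ p * sig μ l - gam μ p * gam μ l) :=
    le_mul_of_one_le_right (sig_nonneg μ k) (one_le_sig_mul_sig_sub_gam_mul_gam hep hel)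
  have hσγk : (sig μ k - gam μ k) * A ≤ gam μ k / 2 :=
    calc (sig μ k - gam μ k) * A ≤ (sig μ k - gam μ k) * gam μ k ^ 2 :=
          mul_le_mul_of_nonneg_left hA (sub_nonneg.2 (gam_le_sig hek))
      _ = gam μ k * (2 * gam μ k * (sig μ k - gam μ k)) / 2 := by ring
      _ ≤ gam μ k * 1 / 2 := by gcongr; exact two_mul_gam_mul_sig_sub_gam_le_one hek
      _ = gam μ k / 2 := by ring
  rw [hvertex]
  linarith [gam_le_sig hek]

noncomputable def selfEnergyIntegrand (μ v₀ k p l : ℝ) : ℝ :=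
  hcub μ v₀ k p l ^ 2 * p * l / (8 * k * (disp μ p + disp μ l))

lemma sigmaCut0_eq (μ v₀ Λ k : ℝ) : SigmaCut0 μ v₀ Λ k = -(1 / (4 * π ^ 2)) *
    ∫ t in k..Λ, ∫ s in -k..k, selfEnergyIntegrand μ v₀ k ((t + s) / 2) ((t - s) / 2) := rfl

lemma measurable_selfEnergyIntegrand (μ v₀ k : ℝ) : Measurable
    (Function.uncurry fun t s => selfEnergyIntegrand μ v₀ k ((t + s) / 2) ((t - s) / 2)) := by
  unfold Function.uncurry selfEnergyIntegrand hcub; fun_prop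

lemma selfEnergyIntegrand_nonneg (hk : 0 ≤ k) (hp : 0 ≤ p) (hl : 0 ≤ l) :
    0 ≤ selfEnergyIntegrand μ v₀ k p l := by
  have := disp_nonneg μ p; have := disp_nonneg μ l
  unfold selfEnergyIntegrand; positivity

lemma selfEnergyIntegrand_le (hμ : 0 < μ) (hv : 0 ≤ v₀) (hk : 0 < k) (hp : 0 < p) (hl : 0 < l)
    (hpΛ : p ≤ Λ) (hlΛ : l ≤ Λ) (hkpl : k ≤ p + l) :
    selfEnergyIntegrand μ v₀ k p l ≤
      36 * (μ * v₀) * sig μ k ^ 2 * (Λ + √μ / 2) ^ 2 / (8 * k * (√μ * k)) := by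
  have hnum : hcub μ v₀ k p l ^ 2 * p * l ≤ 36 * (μ * v₀) * sig μ k ^ 2 * (Λ + √μ / 2) ^ 2 :=
    calc hcub μ v₀ k p l ^ 2 * p * l
        ≤ 36 * (μ * v₀) * (sig μ k * sig μ p * sig μ l) ^ 2 * p * l := by
          gcongr; exact hcub_sq_le hμ hv hk hp hl
      _ = 36 * (μ * v₀) * sig μ k ^ 2 * ((p * sig μ p ^ 2) * (l * sig μ l ^ 2)) := by ring
      _ ≤ 36 * (μ * v₀) * sig μ k ^ 2 * ((Λ + √μ / 2) * (Λ + √μ / 2)) := by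
          have := mul_sig_sq_le hμ hp
          have := mul_sig_sq_le hμ hl
          have := sqrt_nonneg μ
          gcongr <;> linarith
      _ = 36 * (μ * v₀) * sig μ k ^ 2 * (Λ + √μ / 2) ^ 2 := by ring
  have hden : √μ * k ≤ disp μ p + disp μ l := by
    nlinarith [sqrt_mul_le_disp hμ.le hp.le, sqrt_mul_le_disp hμ.le hl.le, sqrt_nonneg μ]
  have := sqrt_pos.2 hμ
  exact div_le_div₀ (by positivity) hnum (by positivity) (by gcongr)

lemma le_selfEnergyIntegrand (hμ : 0 < μ) (hv : 0 ≤ v₀) (hk : 0 < k) {q : ℝ} (hq : 0 < q)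
    (hqp : q ≤ p) (hpΛ : p ≤ Λ) (hql : q ≤ l) (hlΛ : l ≤ Λ)
    (hγk : 2 * (1 + μ / (2 * disp μ q)) * (μ / (2 * disp μ q)) ≤ gam μ k ^ 2) :
    μ * v₀ * gam μ k ^ 2 * q ^ 2 / (8 * k * (2 * disp μ Λ)) ≤ selfEnergyIntegrand μ v₀ k p l := by
  have hp := hq.trans_le hqp
  have hl := hq.trans_le hql
  have := disp_pos hμ hq
  have hγ : ∀ x, q ≤ x → gam μ x ≤ μ / (2 * disp μ q) := fun x hx =>
    (gam_le_div hμ.le (disp_pos hμ (hq.trans_le hx))).trans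
      (div_le_div_of_nonneg_left hμ.le (by positivity)
        (by gcongr; exact disp_le_disp hμ.le hq.le hx))
  have hvertex := half_gam_le_vertex hμ hk hp hl (hγ p hqp) (hγ l hql) hγk
  have := gam_nonneg μ k
  have hnum : μ * v₀ * gam μ k ^ 2 * q ^ 2 ≤ hcub μ v₀ k p l ^ 2 * p * l :=
    calc μ * v₀ * gam μ k ^ 2 * q ^ 2 = (2 * √(μ * v₀) * (gam μ k / 2)) ^ 2 * q * q := by
          rw [mul_pow, mul_pow, sq_sqrt (by positivity)]; ring
      _ ≤ (2 * √(μ * v₀) * vertex μ k p l) ^ 2 * p * l := by gcongr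
      _ = hcub μ v₀ k p l ^ 2 * p * l := by rw [hcub_eq_mul_vertex]
  have hden : disp μ p + disp μ l ≤ 2 * disp μ Λ := by
    linarith [disp_le_disp hμ.le hp.le hpΛ, disp_le_disp hμ.le hl.le hlΛ]
  have := disp_pos hμ hp
  have := disp_pos hμ hl
  have := disp_pos hμ (hp.trans_le hpΛ)
  exact div_le_div₀ (by positivity) hnum (by positivity) (by gcongr)

lemma sigmaCut0_le_neg_mul_gam_sq (hμ : 0 < μ) (hv : 0 ≤ v₀) (hk : 0 < k) (hkΛ : k ≤ Λ / 4)
    (hγk : 2 * (1 + μ / (2 * disp μ (Λ / 8))) * (μ / (2 * disp μ (Λ / 8))) ≤ gam μ k ^ 2) :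
    SigmaCut0 μ v₀ Λ k ≤ -(Λ ^ 3 * μ * v₀ / (4096 * π ^ 2 * disp μ Λ) * gam μ k ^ 2) := by
  have hΛ : 0 < Λ := by linarith
  have hI := mul_mul_le_integral_integral
    (F := fun t s => selfEnergyIntegrand μ v₀ k ((t + s) / 2) ((t - s) / 2))
    (a := k) (m := Λ / 2) (b := Λ) (c := -k) (d := k)
    (measurable_selfEnergyIntegrand μ v₀ k)
    (by linarith) (by linarith) (by linarith)
    (fun t ht s hs => selfEnergyIntegrand_nonneg hk.le (by linarith [ht.1, hs.1])
      (by linarith [ht.1, hs.2]))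
    (fun t ht s hs => selfEnergyIntegrand_le (Λ := Λ) hμ hv hk (by linarith [ht.1, hs.1])
      (by linarith [ht.1, hs.2]) (by linarith [ht.2, hs.2]) (by linarith [ht.2, hs.1])
      (by linarith [ht.1]))
    (fun t ht s hs => le_selfEnergyIntegrand (Λ := Λ) hμ hv hk (q := Λ / 8) (by positivity)
      (by linarith [ht.1, hs.1]) (by linarith [ht.2, hs.2]) (by linarith [ht.1, hs.2])
      (by linarith [ht.2, hs.1]) hγk)
  have := disp_pos hμ hΛ
  have := pi_pos
  rw [sigmaCut0_eq]
  calc _ ≤ -(1 / (4 * π ^ 2)) * ((Λ - Λ / 2) * ((k - -k) *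
        (μ * v₀ * gam μ k ^ 2 * (Λ / 8) ^ 2 / (8 * k * (2 * disp μ Λ))))) :=
        mul_le_mul_of_nonpos_left hI (by simp only [one_div, neg_nonpos]; positivity)
    _ = _ := by field_simp; ring

end Bogoliubov

open Bogoliubov

theorem stmt17 (μ v₀ Λ : ℝ) (hμ : 0 < μ) (hv : 0 < v₀) (hΛ : 0 < Λ) :
    Tendsto (fun k => SigmaCut0 μ v₀ Λ k) (𝓝[>] (0:ℝ)) atBot := by
  have hγ := tendsto_gam_sq_nhdsGT_zero hμ
  have hC : 0 < Λ ^ 3 * μ * v₀ / (4096 * π ^ 2 * disp μ Λ) := by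
    have := disp_pos hμ hΛ
    positivity
  refine tendsto_atBot_mono' _ ?_ (tendsto_neg_atTop_atBot.comp (hγ.const_mul_atTop hC))
  filter_upwards [self_mem_nhdsWithin, Ioo_mem_nhdsGT (by positivity : (0 : ℝ) < Λ / 4),
    hγ.eventually_ge_atTop (2 * (1 + μ / (2 * disp μ (Λ / 8))) * (μ / (2 * disp μ (Λ / 8))))]
    with k hk hkΛ hγk
  exact sigmaCut0_le_neg_mul_gam_sq hμ hv.le hk hkΛ.2.le hγk
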